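/- arXiv:2506.12648 — 2 statements merged into one kernel-verified Lean document; each statement's English description precedes it below -/
import Mathlib

section
/- Let f : ℝ^d → ℝ be differentiable, glocally (L, L_*, δ)-smooth, and μ-strongly convex with minimum value f_* attained at the unique minimizer w_*. Assume f(w₀) − f_* > δ > ε > 0. Let (w_t) be gradient-descent iterates with the Polyak step size: w_{t+1} = w_t − η_t∇f(w_t) where η_t = (f(w_t) − f_*)/‖∇f(w_t)‖² if ∇f(w_t) ≠ 0, and w_{t+1} = w_t otherwise. Then f(w_T) − f_* ≤ ε for every natural number T with T ≥ ⌈(4L/μ)log(L‖w₀ − w_*‖²/(2δ))⌉ + ⌈(4L_*/μ)log(L_*δ/(Lε))⌉. -/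
open scoped RealInnerProductSpace Classical

/-!
A Polyak step from `w` moves towards the minimizer `w⋆` by at least
`(f w - f⋆)² / ‖∇f w‖²` in squared distance, since `⟪∇f w, w - w⋆⟫ ≥ f w - f⋆` by convexity.
Where `f` is `M`-smooth, `‖∇f w‖² ≤ 2M (f w - f⋆)`, and strong convexity gives
`f w - f⋆ ≥ μ/2 ‖w - w⋆‖²`, so the squared distance contracts by `1 - μ/(4M)`.
This holds with `M = L` everywhere. Inside the sublevel set `{f - f⋆ ≤ δ}` it holds with
`M = L⋆`: a gradient step of length `1/L⋆` cannot leave that set, because the directional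
derivative stays negative as long as the path is inside it. The ball
`{L⋆/2 ‖w - w⋆‖² ≤ δ}` lies in the sublevel set, and distances to `w⋆` never increase, so once
an iterate enters the ball the faster rate holds from then on. The budget `T` is then split
between the two rates; when `L ≤ L⋆` the global rate alone suffices.
-/

open Set Real

section FirstOrder

variable {E : Type*} [NormedAddCommGroup E] [InnerProductSpace ℝ E] {f : E → ℝ} {f' : E → E}

lemma convexOn_univ_of_le_add_inner (h : ∀ u v, f u + ⟪f' u, v - u⟫ ≤ f v) :
    ConvexOn ℝ univ f := by
  refine ⟨convex_univ, fun u _ v _ a b ha hb hab => ?_⟩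
  set x := a • u + b • v
  have hcomb : a • (u - x) + b • (v - x) = 0 := by
    rw [show a • (u - x) + b • (v - x) = x - (a + b) • x by module, hab, one_smul, sub_self]
  have hinner : a * ⟪f' x, u - x⟫ + b * ⟪f' x, v - x⟫ = 0 := by
    rw [← real_inner_smul_right, ← real_inner_smul_right, ← inner_add_right, hcomb,
      inner_zero_right]
  have hu := mul_le_mul_of_nonneg_left (h x u) ha
  have hv := mul_le_mul_of_nonneg_left (h x v) hb
  simp only [smul_eq_mul]
  linear_combination hu + hv - hinner - f x * hab

noncomputable def polyakStep [DecidableEq E] (f : E → ℝ) (f' : E → E) (fstar : ℝ) (w : E) : E :=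
  if f' w = 0 then w else w - ((f w - fstar) / ‖f' w‖ ^ 2) • f' w

lemma sq_dist_polyakStep_le [DecidableEq E] {μ M fstar : ℝ} {w wstar : E} (hμ : 0 < μ)
    (hM : 0 < M) (hinner : f w - fstar ≤ ⟪f' w, w - wstar⟫)
    (hgrowth : μ / 2 * ‖w - wstar‖ ^ 2 ≤ f w - fstar)
    (hgrad : ‖f' w‖ ^ 2 ≤ 2 * M * (f w - fstar)) :
    ‖polyakStep f f' fstar w - wstar‖ ^ 2 ≤ (1 - μ / (4 * M)) * ‖w - wstar‖ ^ 2 := by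
  unfold polyakStep
  split_ifs with hg
  · rw [hg, inner_zero_left] at hinner
    have : ‖w - wstar‖ ^ 2 = 0 := by nlinarith [sq_nonneg ‖w - wstar‖]
    simp [this]
  set Δ := f w - fstar
  set g := f' w
  have hg2 : 0 < ‖g‖ ^ 2 := by positivity
  have hΔ : 0 ≤ Δ := le_trans (by positivity) hgrowth
  have hdecr : ‖w - wstar - (Δ / ‖g‖ ^ 2) • g‖ ^ 2 ≤ ‖w - wstar‖ ^ 2 - Δ ^ 2 / ‖g‖ ^ 2 := by
    rw [norm_sub_sq_real, real_inner_smul_right, norm_smul, mul_pow,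
      Real.norm_of_nonneg (div_nonneg hΔ hg2.le), real_inner_comm]
    have : Δ / ‖g‖ ^ 2 * Δ ≤ Δ / ‖g‖ ^ 2 * ⟪g, w - wstar⟫ := by gcongr
    have : (Δ / ‖g‖ ^ 2) ^ 2 * ‖g‖ ^ 2 = Δ / ‖g‖ ^ 2 * Δ := by field_simp
    have : Δ / ‖g‖ ^ 2 * Δ = Δ ^ 2 / ‖g‖ ^ 2 := by ring
    linarith
  have hΔg : μ / (4 * M) * ‖w - wstar‖ ^ 2 ≤ Δ ^ 2 / ‖g‖ ^ 2 := by
    calc μ / (4 * M) * ‖w - wstar‖ ^ 2 = (μ / 2 * ‖w - wstar‖ ^ 2) / (2 * M) := by ring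
      _ ≤ Δ / (2 * M) := by gcongr
      _ ≤ Δ ^ 2 / ‖g‖ ^ 2 := by
        rw [div_le_div_iff₀ (by positivity) hg2]
        nlinarith [mul_le_mul_of_nonneg_left hgrad hΔ]
  rw [sub_right_comm]
  linarith

lemma sq_dist_polyakStep_le_exp [DecidableEq E] {μ M : ℝ} {w wstar : E} (hμ : 0 < μ)
    (hM : 0 < M) (hsc : ∀ u v, f u + ⟪f' u, v - u⟫ + μ / 2 * ‖v - u‖ ^ 2 ≤ f v)
    (hcrit : f' wstar = 0) (hgrad : ‖f' w‖ ^ 2 ≤ 2 * M * (f w - f wstar)) :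
    ‖polyakStep f f' (f wstar) w - wstar‖ ^ 2 ≤ exp (-(μ / (4 * M))) * ‖w - wstar‖ ^ 2 := by
  have hinner := hsc w wstar
  have hgrowth := hsc wstar w
  rw [inner_sub_right] at hinner
  rw [hcrit, inner_zero_left] at hgrowth
  refine (sq_dist_polyakStep_le hμ hM ?_ (by linarith) hgrad).trans
    (mul_le_mul_of_nonneg_right (one_sub_le_exp_neg _) (sq_nonneg _))
  rw [inner_sub_right]
  nlinarith [sq_nonneg ‖wstar - w‖]

end FirstOrder

section Smooth

variable {E : Type*} [NormedAddCommGroup E] [InnerProductSpace ℝ E] [CompleteSpace E]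
  {f : E → ℝ} {f' : E → E}

lemma gradient_eq_zero_of_isMin (hf : ∀ x, HasGradientAt f (f' x) x) {w : E}
    (hmin : ∀ x, f w ≤ f x) : f' w = 0 := by
  simpa using IsLocalMin.hasFDerivAt_eq_zero (Filter.Eventually.of_forall hmin) (hf w).hasFDerivAt

lemma hasDerivAt_comp_add_smul (hf : ∀ x, HasGradientAt f (f' x) x) (x v : E) (t : ℝ) :
    HasDerivAt (fun s : ℝ => f (x + s • v)) ⟪f' (x + t • v), v⟫ t := by
  have hline : HasDerivAt (fun s : ℝ => x + s • v) v t := by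
    simpa using ((hasDerivAt_id t).smul_const v).const_add x
  simpa [Function.comp_def, InnerProductSpace.toDual_apply_apply] using
    (hf (x + t • v)).hasFDerivAt.comp_hasDerivAt t hline

lemma le_add_inner_add_sq_of_lipschitzOn {s : Set E} {K : ℝ}
    (hf : ∀ x, HasGradientAt f (f' x) x) (hs : Convex ℝ s)
    (hlip : ∀ u ∈ s, ∀ v ∈ s, ‖f' u - f' v‖ ≤ K * ‖u - v‖) {u v : E} (hu : u ∈ s) (hv : v ∈ s) :
    f v ≤ f u + ⟪f' u, v - u⟫ + K / 2 * ‖v - u‖ ^ 2 := by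
  set d := v - u
  have hderiv : ∀ t : ℝ, HasDerivAt (fun s : ℝ => f u + s * ⟪f' u, d⟫ + K / 2 * ‖d‖ ^ 2 * s ^ 2)
      (⟪f' u, d⟫ + K * t * ‖d‖ ^ 2) t := fun t =>
    ((((hasDerivAt_id' t).mul_const ⟪f' u, d⟫).const_add (f u)).add
      ((hasDerivAt_pow 2 t).const_mul (K / 2 * ‖d‖ ^ 2))).congr_deriv (by ring)
  have key := image_le_of_deriv_right_le_deriv_boundary (a := 0) (b := 1)
    (fun t _ => (hasDerivAt_comp_add_smul hf u d t).continuousAt.continuousWithinAt)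
    (fun t _ => (hasDerivAt_comp_add_smul hf u d t).hasDerivWithinAt) (by simp)
    (fun t _ => (hderiv t).continuousAt.continuousWithinAt)
    (fun t _ => (hderiv t).hasDerivWithinAt) ?_ (right_mem_Icc.mpr zero_le_one)
  · simpa [d] using key
  rintro t ⟨ht0, ht1⟩
  have hlip' := hlip _ (by simpa [d] using hs.add_smul_sub_mem hu hv ⟨ht0, ht1.le⟩) u hu
  rw [add_sub_cancel_left, norm_smul, Real.norm_of_nonneg ht0] at hlip'
  calc ⟪f' (u + t • d), d⟫ = ⟪f' u, d⟫ + ⟪f' (u + t • d) - f' u, d⟫ := by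
        rw [inner_sub_left]; ring
    _ ≤ ⟪f' u, d⟫ + ‖f' (u + t • d) - f' u‖ * ‖d‖ := by gcongr; exact real_inner_le_norm _ _
    _ ≤ ⟪f' u, d⟫ + K * (t * ‖d‖) * ‖d‖ := by gcongr
    _ = ⟪f' u, d⟫ + K * t * ‖d‖ ^ 2 := by ring

lemma sq_norm_gradient_le {s : Set E} {K m : ℝ} (hf : ∀ x, HasGradientAt f (f' x) x)
    (hK : 0 < K) (hs : Convex ℝ s) (hlip : ∀ u ∈ s, ∀ v ∈ s, ‖f' u - f' v‖ ≤ K * ‖u - v‖)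
    (hmin : ∀ y, m ≤ f y) {x : E} (hx : x ∈ s) (hy : x - K⁻¹ • f' x ∈ s) :
    ‖f' x‖ ^ 2 ≤ 2 * K * (f x - m) := by
  have h := le_add_inner_add_sq_of_lipschitzOn hf hs hlip hx hy
  rw [sub_sub_cancel_left, inner_neg_right, real_inner_smul_right, real_inner_self_eq_norm_sq,
    norm_neg, norm_smul, Real.norm_of_nonneg (inv_nonneg.mpr hK.le)] at h
  have hdrop : K⁻¹ * ‖f' x‖ ^ 2 / 2 ≤ f x - m := by
    have : K / 2 * (K⁻¹ * ‖f' x‖) ^ 2 = K⁻¹ * ‖f' x‖ ^ 2 / 2 := by field_simp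
    linarith [hmin (x - K⁻¹ • f' x)]
  calc ‖f' x‖ ^ 2 = 2 * K * (K⁻¹ * ‖f' x‖ ^ 2 / 2) := by field_simp
    _ ≤ 2 * K * (f x - m) := by gcongr

lemma segment_subset_sublevel {K c : ℝ} (hf : ∀ x, HasGradientAt f (f' x) x) (hK : 0 < K)
    (hlip : ∀ u v, f u ≤ c → f v ≤ c → ‖f' u - f' v‖ ≤ K * ‖u - v‖) {x : E} (hx : f x ≤ c) :
    segment ℝ x (x - K⁻¹ • f' x) ⊆ {y | f y ≤ c} := by
  set g := f' x
  by_cases hg : g = 0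
  · simpa [hg] using hx
  rw [segment_eq_image', sub_sub_cancel_left]
  rintro _ ⟨t, ht, rfl⟩
  -- wherever `f` touches the level `c` along the step, its derivative there is negative
  refine image_le_of_deriv_right_lt_deriv_boundary' (a := 0) (b := 1) (B := fun _ => c) (B' := 0)
    (fun t _ => (hasDerivAt_comp_add_smul hf x (-(K⁻¹ • g)) t).continuousAt.continuousWithinAt)
    (fun t _ => (hasDerivAt_comp_add_smul hf x (-(K⁻¹ • g)) t).hasDerivWithinAt)
    (by simpa using hx) continuousOn_const (fun _ _ => hasDerivWithinAt_const _ _ _) ?_ ht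
  rintro s ⟨hs0, hs1⟩ hsc
  set y := x + s • -(K⁻¹ • g)
  have hlip' := hlip y x (le_of_eq hsc) hx
  rw [add_sub_cancel_left, norm_smul, norm_neg, norm_smul, Real.norm_of_nonneg hs0,
    Real.norm_of_nonneg (inv_nonneg.mpr hK.le)] at hlip'
  have hcs : -⟪f' y - g, g⟫ ≤ ‖f' y - g‖ * ‖g‖ := by
    rw [← inner_neg_left]; exact (real_inner_le_norm _ _).trans (by rw [norm_neg])
  have hpos : 0 < ‖g‖ ^ 2 + ⟪f' y - g, g⟫ := calc
    0 < (1 - s) * ‖g‖ ^ 2 := mul_pos (by linarith) (by positivity)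
    _ = ‖g‖ ^ 2 - K * (s * (K⁻¹ * ‖g‖)) * ‖g‖ := by field_simp
    _ ≤ ‖g‖ ^ 2 - ‖f' y - g‖ * ‖g‖ := by gcongr
    _ ≤ ‖g‖ ^ 2 + ⟪f' y - g, g⟫ := by linarith
  have hsplit : ⟪f' y, g⟫ = ‖g‖ ^ 2 + ⟪f' y - g, g⟫ := by
    rw [inner_sub_left, real_inner_self_eq_norm_sq]; ring
  rw [Pi.zero_apply, inner_neg_right, real_inner_smul_right, hsplit]
  exact neg_neg_of_pos (mul_pos (inv_pos.mpr hK) hpos)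

lemma sq_norm_gradient_le_of_sublevel {K c m : ℝ} (hf : ∀ x, HasGradientAt f (f' x) x)
    (hK : 0 < K) (hlip : ∀ u v, f u ≤ c → f v ≤ c → ‖f' u - f' v‖ ≤ K * ‖u - v‖)
    (hmin : ∀ y, m ≤ f y) {x : E} (hx : f x ≤ c) :
    ‖f' x‖ ^ 2 ≤ 2 * K * (f x - m) :=
  have hseg := segment_subset_sublevel hf hK hlip hx
  sq_norm_gradient_le hf hK (convex_segment _ _) (fun u hu v hv => hlip u v (hseg hu) (hseg hv))
    hmin (left_mem_segment ..) (right_mem_segment ..)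

lemma sub_le_of_sq_dist_le {K δ : ℝ} (hf : ∀ x, HasGradientAt f (f' x) x)
    (hconv : ConvexOn ℝ univ f) {w : E} (hw : f' w = 0) (hK : 0 < K) (hδ : 0 < δ)
    (hlip : ∀ u v, f u ≤ f w + δ → f v ≤ f w + δ → ‖f' u - f' v‖ ≤ K * ‖u - v‖)
    {x : E} (hx : ‖x - w‖ ^ 2 ≤ 2 * δ / K) :
    f x - f w ≤ δ := by
  rw [le_div_iff₀ hK] at hx
  have hS : Convex ℝ {y | f y ≤ f w + δ} := by simpa using hconv.convex_le (f w + δ)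
  have hquad : ∀ y, f y ≤ f w + δ → f y - f w ≤ K / 2 * ‖y - w‖ ^ 2 := fun y hy => by
    have := le_add_inner_add_sq_of_lipschitzOn hf hS (fun u hu v hv => hlip u v hu hv)
      (show f w ≤ f w + δ by linarith) hy
    rw [hw, inner_zero_left] at this
    linarith
  by_contra! hxδ
  -- the segment from `w` to `x` would cross the level `f w + δ` strictly before `x`
  have hcont : Continuous fun s : ℝ => f (w + s • (x - w)) :=
    (Differentiable.continuous fun y => (hf y).differentiableAt).comp (by fun_prop)
  obtain ⟨t, ⟨ht0, ht1⟩, hft⟩ := intermediate_value_Ico zero_le_one hcont.continuousOn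
    (show f w + δ ∈ Ico (f (w + (0 : ℝ) • (x - w))) (f (w + (1 : ℝ) • (x - w))) by
      simp only [zero_smul, add_zero, one_smul, add_sub_cancel]; exact ⟨by linarith, by linarith⟩)
  have hft : f (w + t • (x - w)) = f w + δ := hft
  have := hquad _ hft.le
  rw [hft, add_sub_cancel_left, add_sub_cancel_left, norm_smul, Real.norm_of_nonneg ht0,
    mul_pow, mul_left_comm] at this
  have ht2 : t ^ 2 < 1 := by nlinarith
  nlinarith [mul_le_mul_of_nonneg_left hx (sq_nonneg t), mul_lt_mul_of_pos_right ht2 hδ]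

end Smooth

section TwoRates

lemma le_exp_neg_mul_of_forall_le {r : ℕ → ℝ} {a : ℝ} (h : ∀ t, r (t + 1) ≤ exp (-a) * r t)
    (n : ℕ) : r n ≤ exp (-(a * n)) * r 0 := by
  have := le_geom (exp_pos _).le n fun k _ => h k
  rwa [← Real.exp_nat_mul, mul_neg, mul_comm (n : ℝ) a] at this

lemma le_exp_neg_of_two_rates {r : ℕ → ℝ} {a b ρ : ℝ} (hr : ∀ t, 0 ≤ r t) (ha : 0 ≤ a)
    (hglob : ∀ t, r (t + 1) ≤ exp (-a) * r t) (hloc : ∀ t, r t ≤ ρ → r (t + 1) ≤ exp (-b) * r t)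
    {n : ℕ} (hn : exp (-(a * n)) * r 0 ≤ ρ) (k : ℕ) :
    r (n + k) ≤ exp (-(a * n + b * k)) * r 0 := by
  have hanti : Antitone r := antitone_nat_of_succ_le fun t =>
    (hglob t).trans (mul_le_of_le_one_left (hr t) (exp_le_one_iff.mpr (by linarith)))
  have hrn := le_exp_neg_mul_of_forall_le hglob n
  have hk := le_exp_neg_mul_of_forall_le (r := fun j => r (n + j))
    (fun j => hloc _ ((hanti (Nat.le_add_right n j)).trans (hrn.trans hn))) k
  calc r (n + k) ≤ exp (-(b * k)) * r n := hk
    _ ≤ exp (-(b * k)) * (exp (-(a * n)) * r 0) := by gcongr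
    _ = exp (-(a * n + b * k)) * r 0 := by rw [← mul_assoc, ← exp_add]; ring_nf

lemma exists_split_of_ceil_add_ceil_le {a b Λ₁ Λ₂ : ℝ} (ha : 0 < a) (hb : 0 < b)
    (hΛ₁ : 0 ≤ Λ₁) (hΛ₂ : 0 < Λ₂) {T : ℕ}
    (hT : ⌈(Λ₁ + log (b / a)) / a⌉ + ⌈(Λ₂ - log (b / a)) / b⌉ ≤ (T : ℤ)) :
    ∃ n ≤ T, Λ₁ ≤ a * n ∧ Λ₁ + Λ₂ ≤ a * n + b * (T - n) := by
  set ℓ := log (b / a)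
  have hx₁ : a * ((Λ₁ + ℓ) / a) = Λ₁ + ℓ := by field_simp
  have hx₂ : b * ((Λ₂ - ℓ) / b) = Λ₂ - ℓ := by field_simp
  have hT' : (⌈(Λ₁ + ℓ) / a⌉ : ℝ) + (Λ₂ - ℓ) / b ≤ T := by
    have : ((⌈(Λ₁ + ℓ) / a⌉ + ⌈(Λ₂ - ℓ) / b⌉ : ℤ) : ℝ) ≤ T := by exact_mod_cast hT
    push_cast at this
    linarith [Int.le_ceil ((Λ₂ - ℓ) / b)]
  rcases le_total a b with hab | hba
  · have hℓ : 0 ≤ ℓ := log_nonneg ((one_le_div ha).mpr hab)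
    set n := ⌈Λ₁ / a⌉₊
    have hn : Λ₁ ≤ a * n := by rw [← div_le_iff₀' ha]; exact Nat.le_ceil _
    have hn' : a * n < Λ₁ + a := by
      have := mul_lt_mul_of_pos_left (Nat.ceil_lt_add_one (div_nonneg hΛ₁ ha.le)) ha
      rwa [mul_add, mul_div_cancel₀ _ ha.ne', mul_one] at this
    have hnx : (n : ℝ) ≤ ⌈(Λ₁ + ℓ) / a⌉ := by
      have : (n : ℤ) ≤ ⌈(Λ₁ + ℓ) / a⌉ := by
        rw [Int.natCast_ceil_eq_ceil (div_nonneg hΛ₁ ha.le)]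
        exact Int.ceil_mono (by gcongr; linarith)
      exact_mod_cast this
    -- `⌈(Λ₁ + ℓ) / a⌉` dominates both `(Λ₁ + ℓ) / a` and `n`; weigh these by `a` and `b - a`
    have hsplit : Λ₁ + Λ₂ ≤ a * n + b * (T - n) := by
      nlinarith [mul_le_mul_of_nonneg_left (Int.le_ceil ((Λ₁ + ℓ) / a)) ha.le,
        mul_le_mul_of_nonneg_left hnx (sub_nonneg.mpr hab), mul_le_mul_of_nonneg_left hT' hb.le]
    refine ⟨n, ?_, hn, hsplit⟩
    by_contra hTn
    have : (T : ℝ) + 1 ≤ n := by exact_mod_cast not_le.mp hTn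
    nlinarith
  · have hℓ : ℓ ≤ 0 := log_nonpos (div_nonneg hb.le ha.le) ((div_le_one ha).mpr hba)
    have hTa : Λ₁ + Λ₂ ≤ a * T := by
      have := mul_le_mul_of_nonneg_left hT' ha.le
      have := mul_le_mul_of_nonneg_left (Int.le_ceil ((Λ₁ + ℓ) / a)) ha.le
      have : Λ₂ - ℓ ≤ a * ((Λ₂ - ℓ) / b) := by
        have := mul_le_mul_of_nonneg_right hba (div_nonneg (by linarith : 0 ≤ Λ₂ - ℓ) hb.le)
        linarith
      nlinarith
    exact ⟨T, le_rfl, by linarith, by simpa using hTa⟩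

lemma le_of_two_rates_of_ceil_add_ceil_le {r : ℕ → ℝ} {a b ρ ρ' : ℝ} (hr : ∀ t, 0 ≤ r t)
    (ha : 0 < a) (hb : 0 < b) (hρ' : 0 < ρ') (hρ'ρ : ρ' < ρ) (hρ : ρ ≤ r 0)
    (hglob : ∀ t, r (t + 1) ≤ exp (-a) * r t) (hloc : ∀ t, r t ≤ ρ → r (t + 1) ≤ exp (-b) * r t)
    {T : ℕ} (hT : ⌈log (b * r 0 / (a * ρ)) / a⌉ + ⌈log (a * ρ / (b * ρ')) / b⌉ ≤ (T : ℤ)) :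
    r T ≤ ρ' := by
  have hρpos : 0 < ρ := hρ'.trans hρ'ρ
  have hr0 : 0 < r 0 := hρpos.trans_le hρ
  have hlog₁ : log (b * r 0 / (a * ρ)) = log (r 0 / ρ) + log (b / a) := by
    rw [← log_mul (by positivity) (by positivity)]; congr 1; field_simp
  have hlog₂ : log (a * ρ / (b * ρ')) = log (ρ / ρ') - log (b / a) := by
    rw [← log_div (by positivity) (by positivity)]; congr 1; field_simp
  rw [hlog₁, hlog₂] at hT
  obtain ⟨n, hn, h₁, h₂⟩ := exists_split_of_ceil_add_ceil_le ha hb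
    (log_nonneg ((one_le_div hρpos).mpr hρ)) (log_pos ((one_lt_div hρ').mpr hρ'ρ)) hT
  obtain ⟨k, rfl⟩ := Nat.exists_eq_add_of_le hn
  push_cast at h₂
  rw [add_sub_cancel_left] at h₂
  have hexp₁ : exp (-log (r 0 / ρ)) * r 0 = ρ := by
    rw [exp_neg, exp_log (by positivity)]; field_simp
  have hexp₂ : exp (-(log (r 0 / ρ) + log (ρ / ρ'))) * r 0 = ρ' := by
    rw [exp_neg, exp_add, exp_log (by positivity), exp_log (by positivity)]; field_simp
  calc r (n + k) ≤ exp (-(a * n + b * k)) * r 0 :=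
        le_exp_neg_of_two_rates hr ha.le hglob hloc (hexp₁ ▸ by gcongr) k
    _ ≤ ρ' := hexp₂ ▸ by gcongr

end TwoRates

/-- Iteration complexity of gradient descent with the Polyak step size
under glocal (L, L_*, δ)-smoothness and μ-strong convexity. -/
theorem gd_polyak_glocal_complexity {d : ℕ}
    (f : EuclideanSpace ℝ (Fin d) → ℝ)
    (f' : EuclideanSpace ℝ (Fin d) → EuclideanSpace ℝ (Fin d))
    (L Ls δ ε μ fstar : ℝ)
    (hL : 0 < L) (hLs : 0 < Ls) (hμ : 0 < μ)
    (hdiff : ∀ x, HasGradientAt f (f' x) x)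
    (hglob : ∀ u v, ‖f' u - f' v‖ ≤ L * ‖u - v‖)
    (hloc : ∀ u v, f u - fstar ≤ δ → f v - fstar ≤ δ → ‖f' u - f' v‖ ≤ Ls * ‖u - v‖)
    (hsc : ∀ u v, f v ≥ f u + ⟪f' u, v - u⟫ + μ / 2 * ‖v - u‖ ^ 2)
    (wstar : EuclideanSpace ℝ (Fin d))
    (hwstar : f wstar = fstar ∧ ∀ x, fstar ≤ f x)
    (w : ℕ → EuclideanSpace ℝ (Fin d))
    (hΔδ : f (w 0) - fstar > δ) (hδε : δ > ε) (hε : ε > 0)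
    (hstep : ∀ t : ℕ,
      w (t + 1) = if f' (w t) = 0 then w t
        else w t - ((f (w t) - fstar) / ‖f' (w t)‖ ^ 2) • f' (w t)) :
    ∀ T : ℕ,
      (⌈4 * L / μ * Real.log (L * ‖w 0 - wstar‖ ^ 2 / (2 * δ))⌉ +
        ⌈4 * Ls / μ * Real.log (Ls * δ / (L * ε))⌉ : ℤ) ≤ T →
      f (w T) - fstar ≤ ε := by
  intro T hT
  obtain ⟨rfl, hmin⟩ := hwstar
  have hδ : 0 < δ := hε.trans hδε
  have hconv : ConvexOn ℝ univ f :=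
    convexOn_univ_of_le_add_inner fun u v => by nlinarith [hsc u v, sq_nonneg ‖v - u‖]
  have hgrad0 : f' wstar = 0 := gradient_eq_zero_of_isMin hdiff hmin
  have hloc' : ∀ u v, f u ≤ f wstar + δ → f v ≤ f wstar + δ → ‖f' u - f' v‖ ≤ Ls * ‖u - v‖ :=
    fun u v hu hv => hloc u v (by linarith) (by linarith)
  have hsub : ∀ c, 0 < c → c ≤ δ → ∀ x, ‖x - wstar‖ ^ 2 ≤ 2 * c / Ls → f x - f wstar ≤ c :=
    fun c hc hcδ x => sub_le_of_sq_dist_le hdiff hconv hgrad0 hLs hc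
      (fun u v hu hv => hloc' u v (by linarith) (by linarith))
  have hrate : ∀ t M, 0 < M → ‖f' (w t)‖ ^ 2 ≤ 2 * M * (f (w t) - f wstar) →
      ‖w (t + 1) - wstar‖ ^ 2 ≤ exp (-(μ / (4 * M))) * ‖w t - wstar‖ ^ 2 := by
    intro t M hM hgrad
    rw [hstep t]
    exact sq_dist_polyakStep_le_exp hμ hM hsc hgrad0 hgrad
  have hglobal : ∀ t, ‖w (t + 1) - wstar‖ ^ 2 ≤ exp (-(μ / (4 * L))) * ‖w t - wstar‖ ^ 2 :=
    fun t => hrate t L hL <| sq_norm_gradient_le hdiff hL convex_univ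
      (fun u _ v _ => hglob u v) hmin trivial trivial
  have hlocal : ∀ t, ‖w t - wstar‖ ^ 2 ≤ 2 * δ / Ls →
      ‖w (t + 1) - wstar‖ ^ 2 ≤ exp (-(μ / (4 * Ls))) * ‖w t - wstar‖ ^ 2 :=
    fun t ht => hrate t Ls hLs <| sq_norm_gradient_le_of_sublevel hdiff hLs hloc' hmin <| by
      linarith [hsub δ hδ le_rfl _ ht]
  have hstart : 2 * δ / Ls ≤ ‖w 0 - wstar‖ ^ 2 :=
    not_lt.mp fun h => (hsub δ hδ le_rfl _ h.le).not_gt hΔδ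
  have hT' : ⌈log (μ / (4 * Ls) * ‖w 0 - wstar‖ ^ 2 / (μ / (4 * L) * (2 * δ / Ls))) /
      (μ / (4 * L))⌉ + ⌈log (μ / (4 * L) * (2 * δ / Ls) / (μ / (4 * Ls) * (2 * ε / Ls))) /
      (μ / (4 * Ls))⌉ ≤ (T : ℤ) := by
    convert hT using 3
    · rw [show μ / (4 * Ls) * ‖w 0 - wstar‖ ^ 2 / (μ / (4 * L) * (2 * δ / Ls))
        = L * ‖w 0 - wstar‖ ^ 2 / (2 * δ) by field_simp]
      field_simp
    · rw [show μ / (4 * L) * (2 * δ / Ls) / (μ / (4 * Ls) * (2 * ε / Ls)) = Ls * δ / (L * ε) by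
        field_simp]
      field_simp
  exact hsub ε hε hδε.le _ <| le_of_two_rates_of_ceil_add_ceil_le (r := fun t => ‖w t - wstar‖ ^ 2)
    (fun _ => sq_nonneg _) (by positivity) (by positivity) (by positivity) (by gcongr) hstart
    hglobal hlocal hT'
end

section
/- Let f : ℝ^d → ℝ be differentiable, glocally (L, L_*, δ)-smooth, and satisfy the μ-PL inequality: (1/2)‖∇f(u)‖² ≥ μ(f(u) − f_*) for all u ∈ ℝ^d, where f_* = inf f. Assume Δ₀ = f(w₀) − f_* > δ > ε > 0 and let (w_t) be gradient-descent iterates w_{t+1} = w_t − η_t∇f(w_t) with each η_t chosen by exact line optimization. Then f(w_T) − f_* ≤ ε for every natural number T with T ≥ ⌈(L/μ)log(Δ₀/δ)⌉ + ⌈(L_*/μ)log(δ/ε)⌉. (Convexity is not assumed.) -/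
/-!
Exact line search does at least as well as the fixed step `1 / C` whenever `C` bounds the
Lipschitz constant of `∇f` on the sublevel set `{f ≤ f w}`: along the ray `w - η ∇f(w)`,
`η ∈ [0, 1 / C]`, the usual descent lemma still holds, because the ray cannot leave the sublevel
set before the quadratic upper bound is established (a barrier argument). Together with the PL
inequality, each step then contracts `f - f_*` by the factor `exp (-μ / C)`. With `C = L`, the gap
drops below `δ` after `⌈(L / μ) log (Δ₀ / δ)⌉` steps; from then on the iterates stay in the
`δ`-sublevel set, where `C = L_*` is admissible, and `⌈(L_* / μ) log (δ / ε)⌉` more steps suffice.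
-/

open Real Set Filter Topology
open scoped InnerProductSpace

theorem le_quadratic_of_deriv_le_on_sublevel {φ φ' : ℝ → ℝ} {K C : ℝ} (hC : 0 < C) (hK : 0 < K)
    (hφ : ∀ s, HasDerivAt φ (φ' s) s)
    (hφ' : ∀ s ∈ Icc 0 C⁻¹, φ s ≤ φ 0 → φ' s ≤ -K + C * K * s) :
    ∀ s ∈ Icc 0 C⁻¹, φ s ≤ φ 0 - K * s + C * K * s ^ 2 / 2 := by
  intro s hs
  -- The slack `c` makes the slope comparison strict; the barrier can only be touched where
  -- `φ ≤ φ 0`, i.e. where the slope bound is available.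
  have hslack : ∀ c ∈ Ioc (0 : ℝ) (1 / 2), φ s ≤ φ 0 - (1 - c) * K * s + C * K * s ^ 2 / 2 := by
    rintro c ⟨hc0, hc⟩
    have hB : ∀ x, HasDerivAt (fun x => φ 0 - (1 - c) * K * x + C * K * x ^ 2 / 2)
        (-((1 - c) * K) + C * K * x) x := fun x =>
      (((hasDerivAt_id' x).const_mul ((1 - c) * K)).const_sub (φ 0)).add
        (((hasDerivAt_pow 2 x).const_mul (C * K)).div_const 2) |>.congr_deriv (by push_cast; ring)
    refine image_le_of_deriv_right_lt_deriv_boundary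
      (fun x _ => (hφ x).continuousAt.continuousWithinAt)
      (fun x _ => (hφ x).hasDerivWithinAt) (by simp) hB ?_ hs
    rintro x ⟨hx0, hx⟩ hx_eq
    have hCx : C * x < 1 := by simpa [hC.ne'] using mul_lt_mul_of_pos_left hx hC
    have hle : φ x ≤ φ 0 := by
      have : 0 ≤ 1 - c - C * x / 2 := by linarith
      rw [hx_eq]; nlinarith [mul_nonneg (mul_nonneg hK.le hx0) this]
    nlinarith [hφ' x ⟨hx0, hx.le⟩ hle]
  have hlim : Tendsto (fun c => φ 0 - (1 - c) * K * s + C * K * s ^ 2 / 2) (𝓝[>] 0)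
      (𝓝 (φ 0 - (1 - 0) * K * s + C * K * s ^ 2 / 2)) :=
    (Continuous.tendsto (by fun_prop) 0).mono_left nhdsWithin_le_nhds
  have hev : ∀ᶠ c in 𝓝[>] 0, φ s ≤ φ 0 - (1 - c) * K * s + C * K * s ^ 2 / 2 := by
    filter_upwards [Ioc_mem_nhdsGT (by norm_num : (0 : ℝ) < 1 / 2)] using hslack
  simpa using ge_of_tendsto hlim hev

theorem le_at_ceil_log_of_contraction {u : ℕ → ℝ} {μ K a b : ℝ} (hμ : 0 < μ) (hK : 0 < K)
    (ha : 0 < a) (hb : 0 < b) (hu₀ : u 0 ≤ a) (hu : ∀ t, u (t + 1) ≤ exp (-(μ / K)) * u t) :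
    u ⌈K / μ * log (a / b)⌉₊ ≤ b := by
  set n := ⌈K / μ * log (a / b)⌉₊
  have hlog : log (a / b) ≤ n * (μ / K) := by
    calc log (a / b) = K / μ * log (a / b) * (μ / K) := by field_simp
      _ ≤ n * (μ / K) := by gcongr; exact Nat.le_ceil _
  calc u n ≤ exp (-(μ / K)) ^ n * u 0 := le_geom (exp_pos _).le n fun t _ => hu t
    _ ≤ exp (-(μ / K)) ^ n * a := by gcongr
    _ ≤ exp (-log (a / b)) * a := by
        rw [← exp_nat_mul]; gcongr; linarith
    _ = b := by rw [exp_neg, exp_log (div_pos ha hb)]; field_simp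

section Descent

variable {E : Type*} [NormedAddCommGroup E] [InnerProductSpace ℝ E] [CompleteSpace E]
  {f : E → ℝ} {f' : E → E} {s : Set E} {w : E} {C : ℝ}

theorem HasGradientAt.hasDerivAt_comp_sub_smul {g v : E} {t : ℝ}
    (h : HasGradientAt f g (w - t • v)) :
    HasDerivAt (fun t : ℝ => f (w - t • v)) (-⟪g, v⟫_ℝ) t := by
  have hline : HasDerivAt (fun t : ℝ => w - t • v) (-v) t := by
    simpa using ((hasDerivAt_id t).smul_const v).const_sub w
  simpa [Function.comp_def, InnerProductSpace.toDual_apply_apply, inner_neg_right] using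
    h.hasFDerivAt.comp_hasDerivAt t hline

theorem descent_lemma_of_lipschitzOn_sublevel (hf : ∀ x, HasGradientAt f (f' x) x) (hC : 0 < C)
    (hs : {x | f x ≤ f w} ⊆ s) (hlip : ∀ u ∈ s, ∀ v ∈ s, ‖f' u - f' v‖ ≤ C * ‖u - v‖) :
    f (w - C⁻¹ • f' w) ≤ f w - ‖f' w‖ ^ 2 / (2 * C) := by
  set g := f' w
  rcases eq_or_ne g 0 with hg | hg
  · simp [hg]
  have hK : 0 < ‖g‖ ^ 2 := by positivity
  have hφ' : ∀ t ∈ Icc 0 C⁻¹, f (w - t • g) ≤ f (w - (0 : ℝ) • g) →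
      -⟪f' (w - t • g), g⟫_ℝ ≤ -‖g‖ ^ 2 + C * ‖g‖ ^ 2 * t := by
    intro t ht hle
    rw [zero_smul, sub_zero] at hle
    have hdist : ‖g - f' (w - t • g)‖ ≤ C * (t * ‖g‖) := by
      simpa [norm_smul, abs_of_nonneg ht.1] using hlip w (hs (le_refl (f w))) _ (hs hle)
    calc -⟪f' (w - t • g), g⟫_ℝ = -‖g‖ ^ 2 + ⟪g - f' (w - t • g), g⟫_ℝ := by
          rw [inner_sub_left, real_inner_self_eq_norm_sq]; ring
      _ ≤ -‖g‖ ^ 2 + ‖g - f' (w - t • g)‖ * ‖g‖ := by gcongr; exact real_inner_le_norm _ _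
      _ ≤ -‖g‖ ^ 2 + C * (t * ‖g‖) * ‖g‖ := by gcongr
      _ = -‖g‖ ^ 2 + C * ‖g‖ ^ 2 * t := by ring
  have := le_quadratic_of_deriv_le_on_sublevel hC hK (fun t => (hf _).hasDerivAt_comp_sub_smul) hφ'
    C⁻¹ ⟨by positivity, le_rfl⟩
  simp only [zero_smul, sub_zero] at this
  calc f (w - C⁻¹ • g) ≤ f w - ‖g‖ ^ 2 * C⁻¹ + C * ‖g‖ ^ 2 * C⁻¹ ^ 2 / 2 := this
    _ = f w - ‖g‖ ^ 2 / (2 * C) := by field_simp; ring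

theorem sub_le_exp_neg_mul_sub_of_le_gradientStep {μ fstar : ℝ} {w' : E}
    (hf : ∀ x, HasGradientAt f (f' x) x) (hC : 0 < C)
    (hs : {x | f x ≤ f w} ⊆ s) (hlip : ∀ u ∈ s, ∀ v ∈ s, ‖f' u - f' v‖ ≤ C * ‖u - v‖)
    (hfstar : fstar ≤ f w) (hpl : 1 / 2 * ‖f' w‖ ^ 2 ≥ μ * (f w - fstar))
    (hstep : f w' ≤ f (w - C⁻¹ • f' w)) :
    f w' - fstar ≤ exp (-(μ / C)) * (f w - fstar) := by
  have hdesc := descent_lemma_of_lipschitzOn_sublevel hf hC hs hlip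
  have hexp : 1 - μ / C ≤ exp (-(μ / C)) := by linarith [add_one_le_exp (-(μ / C))]
  calc f w' - fstar ≤ (1 - μ / C) * (f w - fstar) := by
        have : μ / C * (f w - fstar) ≤ ‖f' w‖ ^ 2 / (2 * C) := by
          rw [div_mul_eq_mul_div, div_le_div_iff₀ hC (by positivity)]; nlinarith
        nlinarith
    _ ≤ exp (-(μ / C)) * (f w - fstar) := by gcongr

end Descent

/-- Iteration complexity of gradient descent with exact line optimization
under glocal (L, L_*, δ)-smoothness and the μ-PL inequality (no convexity assumed). -/
theorem gd_lo_glocal_pl_complexity {d : ℕ}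
    (f : EuclideanSpace ℝ (Fin d) → ℝ)
    (f' : EuclideanSpace ℝ (Fin d) → EuclideanSpace ℝ (Fin d))
    (L Ls δ ε μ fstar : ℝ)
    (hL : 0 < L) (hLs : 0 < Ls) (hμ : 0 < μ)
    (hdiff : ∀ x, HasGradientAt f (f' x) x)
    (hfstar : IsGLB (Set.range f) fstar)
    (hglob : ∀ u v, ‖f' u - f' v‖ ≤ L * ‖u - v‖)
    (hloc : ∀ u v, f u - fstar ≤ δ → f v - fstar ≤ δ → ‖f' u - f' v‖ ≤ Ls * ‖u - v‖)
    (hpl : ∀ u, 1 / 2 * ‖f' u‖ ^ 2 ≥ μ * (f u - fstar))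
    (w : ℕ → EuclideanSpace ℝ (Fin d))
    (hΔδ : f (w 0) - fstar > δ) (hδε : δ > ε) (hε : ε > 0)
    (hstep : ∀ t : ℕ,
      (∃ η : ℝ, w (t + 1) = w t - η • f' (w t)) ∧
        ∀ η : ℝ, f (w (t + 1)) ≤ f (w t - η • f' (w t))) :
    ∀ T : ℕ,
      (⌈L / μ * Real.log ((f (w 0) - fstar) / δ)⌉ + ⌈Ls / μ * Real.log (δ / ε)⌉ : ℤ) ≤ T →
      f (w T) - fstar ≤ ε := by
  intro T hT
  have hδ : 0 < δ := hε.trans hδε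
  have hlow : ∀ x, fstar ≤ f x := fun x => hfstar.1 ⟨x, rfl⟩
  have hanti : Antitone (f ∘ w) := antitone_nat_of_succ_le fun t => by simpa using (hstep t).2 0
  set n₁ := ⌈L / μ * log ((f (w 0) - fstar) / δ)⌉₊
  set n₂ := ⌈Ls / μ * log (δ / ε)⌉₊
  have hphase₁ : f (w n₁) - fstar ≤ δ :=
    le_at_ceil_log_of_contraction (u := fun t => f (w t) - fstar) hμ hL (by linarith) hδ le_rfl
      fun t => sub_le_exp_neg_mul_sub_of_le_gradientStep hdiff hL (subset_univ _)
        (fun u _ v _ => hglob u v) (hlow _) (hpl _) ((hstep t).2 _)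
  have hphase₂ : f (w (n₁ + n₂)) - fstar ≤ ε := by
    refine le_at_ceil_log_of_contraction (u := fun t => f (w (n₁ + t)) - fstar) hμ hLs hδ hε
      hphase₁ fun t => ?_
    have hsub : f (w (n₁ + t)) - fstar ≤ δ := by
      linarith [show f (w (n₁ + t)) ≤ f (w n₁) from hanti (Nat.le_add_right n₁ t)]
    exact sub_le_exp_neg_mul_sub_of_le_gradientStep (s := {u | f u - fstar ≤ δ}) hdiff hLs
      (fun x (hx : f x ≤ _) => show f x - fstar ≤ δ by linarith)
      (fun u hu v hv => hloc u v hu hv) (hlow _) (hpl _) ((hstep _).2 _)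
  have hn : n₁ + n₂ ≤ T := by
    have h₁ := Int.natCast_ceil_eq_ceil (mul_nonneg (div_pos hL hμ).le
      (log_nonneg ((one_le_div hδ).mpr hΔδ.le)))
    have h₂ := Int.natCast_ceil_eq_ceil (mul_nonneg (div_pos hLs hμ).le
      (log_nonneg ((one_le_div hε).mpr hδε.le)))
    omega
  linarith [show f (w T) ≤ f (w (n₁ + n₂)) from hanti hn]
end
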